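/- arXiv:1811.06161 — 3 statements merged into one kernel-verified Lean document; each statement's English description precedes it below -/
import Mathlib

section
/- Let σ : [0,∞) → [0,∞) be a C^∞, nonnegative, convex function with σ(0) = σ'(0) = 0 and σ' concave. Then for all p₁, p₂ ≥ 0, p₁ σ'(p₂) ≤ σ(p₁) + σ(p₂). -/
open MeasureTheory Set Filter

/-- The characteristic function `χ_s` of a set of reals. -/
noncomputable def chi (s : Set ℝ) (x : ℝ) : ℝ := s.indicator (fun _ => (1:ℝ)) x

/-- The power-law breakage function `b(y|z) = (ν+2) y^ν / z^{1+ν}` for `0 < y < z`,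
and `0` otherwise. -/
noncomputable def breakage (ν : ℝ) (y z : ℝ) : ℝ :=
  if 0 < y ∧ y < z then (ν + 2) * y ^ ν / z ^ (1 + ν) else 0

/-- The truncated coagulation kernel
`A_n^ζ(y,z) = A(y,z) χ_{(1/n,n)}(y) χ_{(1/n,n)}(z) [1 - ζ + ζ χ_{(0,n)}(y+z)]`. -/
noncomputable def Atrunc (A : ℝ → ℝ → ℝ) (n : ℕ) (ζ : ℝ) (y z : ℝ) : ℝ :=
  A y z * chi (Ioo (1 / (n:ℝ)) (n:ℝ)) y * chi (Ioo (1 / (n:ℝ)) (n:ℝ)) z *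
    (1 - ζ + ζ * chi (Ioo (0:ℝ) (n:ℝ)) (y + z))

/-- The truncated selection rate `S_n(y) = S(y) χ_{(0,n)}(y)`. -/
noncomputable def Strunc (S : ℝ → ℝ) (n : ℕ) (y : ℝ) : ℝ :=
  S y * chi (Ioo (0:ℝ) (n:ℝ)) y

/-- Assumptions (Λ1)–(Λ4) on the coagulation kernel `A`, the breakage function
`b(y|z) = (ν+2) y^ν/z^{1+ν}`, the selection rate `S` and the initial datum `gin`. -/
structure Assumptions (β ν k₁ k₂ c₁ : ℝ) (A : ℝ → ℝ → ℝ) (S gin : ℝ → ℝ) : Prop where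
  hβ0 : 0 ≤ β
  hβ1 : β < 1 / 2
  hν0 : -1 < ν
  hν1 : ν ≤ 0
  hk₁ : 0 ≤ k₁
  hk₂ : 0 ≤ k₂
  hc₁ : 2 < c₁
  hA_meas : Measurable (Function.uncurry A)
  hA_symm : ∀ y z, A y z = A z y
  hA_nonneg : ∀ y z, 0 < y → 0 < z → 0 ≤ A y z
  hA_bound : ∀ y z, 0 < y → 0 < z → A y z ≤ k₁ * (1 + y + z) / (y * z) ^ β
  hb_bound : ∀ z, 0 < z →
    (∫ y in Ioo (0:ℝ) z, y ^ (-(2 * β)) * breakage ν y z) ≤ c₁ * z ^ (-(2 * β))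
  hS_meas : Measurable S
  hS_nonneg : ∀ y, 0 < y → 0 ≤ S y
  hS_bound : ∀ y, 0 < y → S y ≤ k₂ * y ^ (1 + ν)
  hγ : ∃ γ : ℝ, 1 < γ ∧ γ < 2 ∧ γ * (ν - β) + 1 > 0
  hgin_meas : Measurable gin
  hgin_nonneg : ∀ y, 0 < y → 0 ≤ gin y
  hgin_int : IntegrableOn (fun y => (y ^ (-(2 * β)) + y) * gin y) (Ioi 0)

/-- A (nonnegative) solution of the truncated coagulation–multiple-fragmentation
problem on `(0,n)` with truncation parameter `ζ ∈ {0,1}`. -/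
structure IsTruncSol (ν : ℝ) (A : ℝ → ℝ → ℝ) (S gin : ℝ → ℝ)
    (n : ℕ) (ζ : ℝ) (g : ℝ → ℝ → ℝ) : Prop where
  nonneg : ∀ t, 0 ≤ t → ∀ᵐ y ∂(volume.restrict (Ioo (0:ℝ) (n:ℝ))), 0 ≤ g t y
  integrable : ∀ t, 0 ≤ t → IntegrableOn (g t) (Ioo (0:ℝ) (n:ℝ))
  init : ∀ᵐ y ∂(volume.restrict (Ioo (0:ℝ) (n:ℝ))), g 0 y = gin y
  eqn : ∀ t, 0 ≤ t → ∀ᵐ y ∂(volume.restrict (Ioo (0:ℝ) (n:ℝ))),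
    HasDerivWithinAt (fun s => g s y)
      ((1 / 2) * (∫ z in Ioo (0:ℝ) y, Atrunc A n ζ (y - z) z * g t (y - z) * g t z)
        - (∫ z in Ioo (0:ℝ) ((n:ℝ) - ζ * y), Atrunc A n ζ y z * g t y * g t z)
        + (∫ z in Ioo y (n:ℝ), breakage ν y z * Strunc S n z * g t z)
        - Strunc S n y * g t y) (Ici 0) t

/-- The class `C_{VP,∞}`: `σ` is a nonnegative convex `C^∞` function on `[0,∞)` with
derivative `σ'`, `σ(0) = σ'(0) = 0`, `σ'` concave, and `σ'(p) → ∞`, `σ(p)/p → ∞`. -/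
structure IsCVP (σ σ' : ℝ → ℝ) : Prop where
  smooth : ContDiffOn ℝ (⊤ : ℕ∞) σ (Ici 0)
  deriv : ∀ p ∈ Ici (0:ℝ), HasDerivWithinAt σ (σ' p) (Ici 0) p
  nonneg : ∀ p ∈ Ici (0:ℝ), 0 ≤ σ p
  convex : ConvexOn ℝ (Ici 0) σ
  zero : σ 0 = 0
  dzero : σ' 0 = 0
  dconcave : ConcaveOn ℝ (Ici 0) σ'
  dtop : Tendsto σ' atTop atTop
  qtop : Tendsto (fun p => σ p / p) atTop atTop

/-- The uniform moment bound `𝒢(T) = ‖g^in‖_{L¹_{-2β,1}} e^{k₂(c₁-1)T}`. -/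
noncomputable def Gbound (β k₂ c₁ : ℝ) (gin : ℝ → ℝ) (T : ℝ) : ℝ :=
  (∫ y in Ioi (0:ℝ), (y ^ (-(2 * β)) + y) * gin y) * Real.exp (k₂ * (c₁ - 1) * T)

/-- for `σ ∈ C^∞([0,∞))` nonnegative convex with `σ(0) = σ'(0) = 0` and
`σ'` concave, one has `p₁ σ'(p₂) ≤ σ(p₁) + σ(p₂)` for all `p₁, p₂ ≥ 0`. -/
theorem convex_prop_two
    (σ σ' : ℝ → ℝ)
    (hsmooth : ContDiffOn ℝ (⊤ : ℕ∞) σ (Ici 0))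
    (hderiv : ∀ p ∈ Ici (0:ℝ), HasDerivWithinAt σ (σ' p) (Ici 0) p)
    (hnonneg : ∀ p ∈ Ici (0:ℝ), 0 ≤ σ p)
    (hconvex : ConvexOn ℝ (Ici 0) σ)
    (hzero : σ 0 = 0) (hdzero : σ' 0 = 0)
    (hdconcave : ConcaveOn ℝ (Ici 0) σ') :
    ∀ p₁ p₂ : ℝ, 0 ≤ p₁ → 0 ≤ p₂ → p₁ * σ' p₂ ≤ σ p₁ + σ p₂ := by
  -- Tangent line inequality
  have tangent : ∀ a ∈ Ici (0:ℝ), ∀ b ∈ Ici (0:ℝ), σ' b * (a - b) ≤ σ a - σ b := by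
    intro a ha b hb
    rcases lt_trichotomy a b with h | h | h
    · have := hconvex.slope_le_of_hasDerivWithinAt ha hb h (hderiv b hb)
      rw [slope_def_field] at this
      have hba : 0 < b - a := by linarith
      have := (div_le_iff₀ hba).mp this
      nlinarith
    · simp [h]
    · have := hconvex.le_slope_of_hasDerivWithinAt hb ha h (hderiv b hb)
      rw [slope_def_field] at this
      have hab : 0 < a - b := by linarith
      have := (le_div_iff₀ hab).mp this
      nlinarith
  -- p σ'(p) ≤ 2 σ(p)
  have key : ∀ p ∈ Ici (0:ℝ), p * σ' p ≤ 2 * σ p := by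
    intro p hp
    rcases eq_or_lt_of_le (Set.mem_Ici.mp hp) with h | hp0
    · have h0 := hnonneg 0 Set.self_mem_Ici
      simp only [← h, hdzero]
      linarith
    · set c : ℝ := σ' p / p with hc
      have hmono : MonotoneOn (fun t => 2 * σ t - c * t ^ 2) (Icc 0 p) := by
        apply monotoneOn_of_hasDerivWithinAt_nonneg (convex_Icc 0 p)
          (f' := fun t => 2 * σ' t - c * (2 * t))
        · intro t ht
          have ht' : t ∈ Ici (0:ℝ) := ht.1
          exact (((hderiv t ht').const_mul 2).sub
            (((hasDerivWithinAt_id t (Ici 0)).pow 2).const_mul c)).continuousWithinAt.mono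
            (fun x hx => hx.1)
        · intro t ht
          rw [interior_Icc] at ht
          have ht' : t ∈ Ici (0:ℝ) := le_of_lt ht.1
          rw [interior_Icc]
          have hD := (((hderiv t ht').const_mul 2).sub
            (((hasDerivWithinAt_id t (Ici 0)).pow 2).const_mul c)).mono
            (fun x (hx : x ∈ Ioo (0:ℝ) p) => le_of_lt hx.1)
          exact hD.congr_deriv (by norm_num [id])
        · intro t ht
          rw [interior_Icc] at ht
          -- concavity: σ'(t) ≥ (t/p) σ'(p)
          have ha0 : 0 ≤ 1 - t / p := by
            rw [sub_nonneg]; exact div_le_one_of_le₀ ht.2.le hp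
          have hb0 : 0 ≤ t / p := div_nonneg ht.1.le hp
          have hcomb := hdconcave.2 (Set.self_mem_Ici) (hp : p ∈ Ici (0:ℝ))
            ha0 hb0 (by ring)
          have hval : (1 - t / p) • (0:ℝ) + (t / p) • p = t := by
            simp only [smul_eq_mul]; field_simp; ring
          rw [hval] at hcomb
          rw [hdzero] at hcomb
          have : t / p * σ' p ≤ σ' t := by simpa using hcomb
          have hcp : c * t = t / p * σ' p := by rw [hc]; field_simp
          nlinarith
      have h01 : (0:ℝ) ∈ Icc (0:ℝ) p := ⟨le_refl 0, hp0.le⟩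
      have hpp : p ∈ Icc (0:ℝ) p := ⟨hp0.le, le_refl p⟩
      have := hmono h01 hpp hp0.le
      simp only [hzero] at this
      have hcp2 : c * p ^ 2 = p * σ' p := by rw [hc]; field_simp
      nlinarith
  intro p₁ p₂ h₁ h₂
  have ht := tangent p₁ h₁ p₂ h₂
  have hk := key p₂ h₂
  nlinarith
end

section
/- Let σ : [0,∞) → [0,∞) be a C^∞, nonnegative, convex function with σ(0) = σ'(0) = 0 and σ' concave. Then for all p₁, p₂ > 0, 0 ≤ σ(p₁ + p₂) − σ(p₁) − σ(p₂) ≤ 2 (p₁ σ(p₂) + p₂ σ(p₁)) / (p₁ + p₂). -/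
open MeasureTheory Set Filter

/-- for `σ ∈ C^∞([0,∞))` nonnegative convex with `σ(0) = σ'(0) = 0` and
`σ'` concave, one has
`0 ≤ σ(p₁+p₂) − σ(p₁) − σ(p₂) ≤ 2 (p₁ σ(p₂) + p₂ σ(p₁))/(p₁+p₂)` for all `p₁, p₂ > 0`. -/
theorem convex_prop_three
    (σ σ' : ℝ → ℝ)
    (hsmooth : ContDiffOn ℝ (⊤ : ℕ∞) σ (Ici 0))
    (hderiv : ∀ p ∈ Ici (0:ℝ), HasDerivWithinAt σ (σ' p) (Ici 0) p)
    (hnonneg : ∀ p ∈ Ici (0:ℝ), 0 ≤ σ p)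
    (hconvex : ConvexOn ℝ (Ici 0) σ)
    (hzero : σ 0 = 0) (hdzero : σ' 0 = 0)
    (hdconcave : ConcaveOn ℝ (Ici 0) σ') :
    ∀ p₁ p₂ : ℝ, 0 < p₁ → 0 < p₂ →
      0 ≤ σ (p₁ + p₂) - σ p₁ - σ p₂ ∧
      σ (p₁ + p₂) - σ p₁ - σ p₂ ≤ 2 * (p₁ * σ p₂ + p₂ * σ p₁) / (p₁ + p₂) := by
  have hσcont : ContinuousOn σ (Ici 0) := hsmooth.continuousOn
  have hσ'eq : EqOn σ' (derivWithin σ (Ici 0)) (Ici 0) := fun p hp =>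
    ((hderiv p hp).derivWithin (uniqueDiffOn_Ici 0 p hp)).symm
  have hσ'cont : ContinuousOn σ' (Ici 0) :=
    (hsmooth.continuousOn_derivWithin (uniqueDiffOn_Ici 0) (by simp)).congr hσ'eq
  -- FTC
  have ftc : ∀ a b : ℝ, 0 ≤ a → a ≤ b → ∫ x in a..b, σ' x = σ b - σ a := by
    intro a b ha hab
    have hsub : Icc a b ⊆ Ici (0:ℝ) := fun x hx => ha.trans hx.1
    refine intervalIntegral.integral_eq_sub_of_hasDeriv_right_of_le hab
      (hσcont.mono hsub) (fun x hx => ?_) ?_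
    · exact (hderiv x (hsub (Ioo_subset_Icc_self hx))).mono
        (fun y hy => ((ha.trans hx.1.le).trans hy.le : (0:ℝ) ≤ y))
    · exact ContinuousOn.intervalIntegrable_of_Icc hab (hσ'cont.mono hsub)
  -- σ' subadditive
  have subadd : ∀ x y : ℝ, 0 ≤ x → 0 ≤ y → σ' (x + y) ≤ σ' x + σ' y := by
    intro x y hx hy
    rcases (add_nonneg hx hy).eq_or_lt with h | h
    · have hx0 : x = 0 := by linarith
      have hy0 : y = 0 := by linarith
      simp [hx0, hy0, hdzero]
    · have h1 : x / (x + y) * σ' (x + y) ≤ σ' x := by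
        have := hdconcave.2 (mem_Ici.2 h.le) (mem_Ici.2 le_rfl)
          (div_nonneg hx h.le) (div_nonneg hy h.le)
          (by rw [← add_div, div_self h.ne'])
        simpa [smul_eq_mul, hdzero, div_mul_cancel₀ x h.ne'] using this
      have h2 : y / (x + y) * σ' (x + y) ≤ σ' y := by
        have := hdconcave.2 (mem_Ici.2 le_rfl) (mem_Ici.2 h.le)
          (div_nonneg hx h.le) (div_nonneg hy h.le)
          (by rw [← add_div, div_self h.ne'])
        simpa [smul_eq_mul, hdzero, div_mul_cancel₀ y h.ne'] using this
      have hsum : (x / (x + y) + y / (x + y)) * σ' (x + y) ≤ σ' x + σ' y := by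
        rw [add_mul]; linarith
      rwa [← add_div, div_self h.ne', one_mul] at hsum
  -- p σ'(p) ≤ 2 σ(p)
  have lower : ∀ p : ℝ, 0 < p → p * σ' p ≤ 2 * σ p := by
    intro p hp
    have hpt : ∀ s ∈ Icc (0:ℝ) p, s * (σ' p / p) ≤ σ' s := by
      intro s hs
      have := hdconcave.2 (mem_Ici.2 le_rfl) (mem_Ici.2 hp.le)
        (sub_nonneg.2 ((div_le_one hp).2 hs.2)) (div_nonneg hs.1 hp.le)
        (by ring)
      simp only [smul_eq_mul, mul_zero, hdzero, zero_add, smul_zero,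
        div_mul_cancel₀ s hp.ne'] at this
      calc s * (σ' p / p) = s / p * σ' p := by ring
        _ ≤ σ' s := by simpa using this
    have hint1 : IntervalIntegrable (fun s => s * (σ' p / p)) volume 0 p :=
      (continuous_id.mul continuous_const).intervalIntegrable 0 p
    have hint2 : IntervalIntegrable σ' volume 0 p :=
      ContinuousOn.intervalIntegrable_of_Icc hp.le
        (hσ'cont.mono (fun x hx => hx.1))
    have hmono := intervalIntegral.integral_mono_on hp.le hint1 hint2 hpt
    rw [ftc 0 p le_rfl hp.le, hzero, sub_zero] at hmono
    rw [intervalIntegral.integral_mul_const, integral_id] at hmono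
    have : p ^ 2 / 2 * (σ' p / p) = p * σ' p / 2 := by field_simp
    rw [show ((p:ℝ)^2 - 0^2)/2 = p^2/2 by ring, this] at hmono
    linarith
  -- key integral estimate
  have key : ∀ a b : ℝ, 0 < a → 0 < b → σ (a + b) - σ a - σ b ≤ b * σ' a := by
    intro a b ha hb
    have e1 : σ (a + b) - σ a = ∫ s in (0:ℝ)..b, σ' (a + s) := by
      rw [intervalIntegral.integral_comp_add_left σ' a, add_zero,
        ftc a (a + b) ha.le (by linarith)]
    have e2 : σ b = ∫ s in (0:ℝ)..b, σ' s := by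
      rw [ftc 0 b le_rfl hb.le, hzero, sub_zero]
    have hia : IntervalIntegrable (fun s => σ' (a + s)) volume 0 b := by
      apply ContinuousOn.intervalIntegrable_of_Icc hb.le
      exact hσ'cont.comp (continuous_add_left a).continuousOn
        (fun s hs => by simp; linarith [hs.1])
    have hib : IntervalIntegrable σ' volume 0 b :=
      ContinuousOn.intervalIntegrable_of_Icc hb.le (hσ'cont.mono (fun x hx => hx.1))
    have hmono : (∫ s in (0:ℝ)..b, (σ' (a + s) - σ' s)) ≤ ∫ s in (0:ℝ)..b, σ' a := by
      apply intervalIntegral.integral_mono_on hb.le (hia.sub hib)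
        intervalIntegrable_const
      intro s hs
      have := subadd a s ha.le hs.1
      linarith
    rw [intervalIntegral.integral_sub hia hib, intervalIntegral.integral_const] at hmono
    rw [e1, e2]
    simpa using hmono
  -- assemble
  intro p₁ p₂ hp₁ hp₂
  have hs : (0:ℝ) < p₁ + p₂ := by linarith
  constructor
  · have h1 : σ p₁ ≤ p₁ / (p₁ + p₂) * σ (p₁ + p₂) := by
      have := hconvex.2 (mem_Ici.2 hs.le) (mem_Ici.2 le_rfl)
        (div_nonneg hp₁.le hs.le) (div_nonneg hp₂.le hs.le)
        (by rw [← add_div, div_self hs.ne'])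
      simpa [smul_eq_mul, hzero, div_mul_cancel₀ p₁ hs.ne'] using this
    have h2 : σ p₂ ≤ p₂ / (p₁ + p₂) * σ (p₁ + p₂) := by
      have := hconvex.2 (mem_Ici.2 le_rfl) (mem_Ici.2 hs.le)
        (div_nonneg hp₁.le hs.le) (div_nonneg hp₂.le hs.le)
        (by rw [← add_div, div_self hs.ne'])
      simpa [smul_eq_mul, hzero, div_mul_cancel₀ p₂ hs.ne'] using this
    have hsum : (p₁ / (p₁ + p₂) + p₂ / (p₁ + p₂)) * σ (p₁ + p₂) = σ (p₁ + p₂) := by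
      rw [← add_div, div_self hs.ne', one_mul]
    nlinarith [h1, h2]
  · have k1 := key p₁ p₂ hp₁ hp₂
    have k2 := key p₂ p₁ hp₂ hp₁
    rw [add_comm p₂ p₁] at k2
    have l1 := lower p₁ hp₁
    have l2 := lower p₂ hp₂
    rw [le_div_iff₀ hs]
    nlinarith [mul_le_mul_of_nonneg_left k1 hp₁.le,
      mul_le_mul_of_nonneg_left k2 hp₂.le,
      mul_le_mul_of_nonneg_left l1 hp₂.le,
      mul_le_mul_of_nonneg_left l2 hp₁.le]
end

section
/- Let ν ∈ (-1,0] and let b(y|z) = (ν+2) y^ν / z^{1+ν} for 0 < y < z. Let σ : [0,∞) → [0,∞) be a C^∞, nonnegative, convex function with σ(0) = σ'(0) = 0 and σ' concave. Then for every z > 0, σ(z) − ∫₀^z σ(y) b(y|z) dy ≥ (z σ'(z) − σ(z)) / (ν + 3). -/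
open MeasureTheory Set Filter

private lemma frag_step1 (σ σ' : ℝ → ℝ)
    (hderiv : ∀ p ∈ Ici (0:ℝ), HasDerivWithinAt σ (σ' p) (Ici 0) p)
    (hzero : σ 0 = 0)
    (hdconcave : ConcaveOn ℝ (Ici 0) σ')
    (z : ℝ) (hz : 0 < z) :
    ∀ y ∈ Icc (0:ℝ) z,
      σ y ≤ σ z * y / z - (z * σ' z - σ z) / z ^ 2 * (y * (z - y)) := by
  have hzne : z ≠ 0 := hz.ne'
  set c : ℝ := (z * σ' z - σ z) / z ^ 2 with hc
  set F : ℝ → ℝ := fun y => σ z * y / z - σ y - c * (y * (z - y)) with hF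
  set G : ℝ → ℝ := fun y => σ z / z - σ' y - c * (z - 2 * y) with hG
  have hF' : ∀ y ∈ Ici (0:ℝ), HasDerivWithinAt F (G y) (Ici 0) y := by
    intro y hy
    have h1 : HasDerivWithinAt (fun y : ℝ => σ z * y / z - σ y - c * (y * (z - y)))
        (σ z * 1 / z - σ' y - c * (1 * (z - y) + y * (0 - 1))) (Ici 0) y := by
      exact ((((hasDerivWithinAt_id y (Ici 0)).const_mul (σ z)).div_const z).sub
        (hderiv y hy)).sub
        (((hasDerivWithinAt_id y (Ici 0)).mul
          ((hasDerivWithinAt_const y (Ici 0) z).sub (hasDerivWithinAt_id y (Ici 0)))).const_mul c)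
    have : σ z * 1 / z - σ' y - c * (1 * (z - y) + y * (0 - 1)) = G y := by
      simp only [hG]; ring
    rwa [this] at h1
  have hFcont : ContinuousOn F (Icc 0 z) :=
    fun y hy => ((hF' y hy.1).continuousWithinAt).mono Icc_subset_Ici_self
  have hF0 : F 0 = 0 := by simp [hF, hzero]
  have hFz : F z = 0 := by
    simp only [hF, sub_self, mul_zero, sub_zero]
    field_simp
    ring
  have hGz : G z = 0 := by
    simp only [hG, hc]
    field_simp
    ring
  intro y hy
  by_contra hlt
  push_neg at hlt
  have hFy : F y < 0 := by simp only [hF]; linarith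
  obtain ⟨m, hm, hmin⟩ := isCompact_Icc.exists_isMinOn (nonempty_Icc.2 hz.le) hFcont
  have hFm : F m < 0 := lt_of_le_of_lt (hmin hy) hFy
  have hm0 : m ≠ 0 := by intro h; rw [h, hF0] at hFm; exact absurd hFm (lt_irrefl 0)
  have hmz : m ≠ z := by intro h; rw [h, hFz] at hFm; exact absurd hFm (lt_irrefl 0)
  have hmIoo : m ∈ Ioo 0 z := ⟨lt_of_le_of_ne hm.1 (Ne.symm hm0), lt_of_le_of_ne hm.2 hmz⟩
  have hFat : ∀ x ∈ Ioi (0:ℝ), HasDerivAt F (G x) x :=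
    fun x hx => (hF' x (show (0:ℝ) ≤ x from le_of_lt hx)).hasDerivAt (Ici_mem_nhds hx)
  have hloc : IsLocalMin F m :=
    hmin.isLocalMin (Icc_mem_nhds hmIoo.1 hmIoo.2)
  have hGm : G m = 0 := hloc.hasDerivAt_eq_zero (hFat m hmIoo.1)
  have hmltz : m < z := hmIoo.2
  have hGle : ∀ x ∈ Icc m z, G x ≤ 0 := by
    intro x hx
    have hzm : (0:ℝ) < z - m := by linarith
    set a : ℝ := (z - x) / (z - m) with ha_def
    set b : ℝ := (x - m) / (z - m) with hb_def
    have ha : 0 ≤ a := div_nonneg (by linarith [hx.2]) hzm.le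
    have hb : 0 ≤ b := div_nonneg (by linarith [hx.1]) hzm.le
    have hab : a + b = 1 := by
      simp only [ha_def, hb_def]; field_simp
      ring
    have hcomb : a • m + b • z = x := by
      simp only [ha_def, hb_def, smul_eq_mul]; field_simp; ring
    have h2 := hdconcave.2 (le_of_lt hmIoo.1) hz.le ha hb hab
    rw [hcomb] at h2
    simp only [smul_eq_mul] at h2
    have e1 : a * m + b * z = x := by
      simp only [ha_def, hb_def]; field_simp; ring
    have hexp : a * G m + b * G z
        = σ z / z - (a * σ' m + b * σ' z) - c * (z - 2 * x) := by
      simp only [hG]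
      linear_combination (σ z / z - c * z) * hab + 2 * c * e1
    have : G x ≤ a * G m + b * G z := by
      rw [hexp]
      simp only [hG]
      linarith [h2]
    rw [hGm, hGz] at this
    simpa using this
  have hanti : AntitoneOn F (Icc m z) := by
    apply antitoneOn_of_deriv_nonpos (convex_Icc m z)
      (hFcont.mono (Icc_subset_Icc hm.1 le_rfl))
    · intro x hx
      rw [interior_Icc] at hx
      exact ((hFat x (lt_trans hmIoo.1 hx.1)).differentiableAt).differentiableWithinAt
    · intro x hx
      rw [interior_Icc] at hx
      rw [(hFat x (lt_trans hmIoo.1 hx.1)).deriv]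
      exact hGle x (Ioo_subset_Icc_self hx)
  have : F z ≤ F m := hanti (left_mem_Icc.2 hmltz.le) (right_mem_Icc.2 hmltz.le) hmltz.le
  linarith [hFz, hFm, this]

/-- lower bound on the fragmentation weight
`σ(z) − ∫₀ᶻ σ(y) b(y|z) dy ≥ (z σ'(z) − σ(z))/(ν+3)` for the power-law breakage
function `b(y|z) = (ν+2) y^ν / z^{1+ν}`, `ν ∈ (-1,0]`. -/
theorem fragmentation_convex_lower_bound
    (ν : ℝ) (hν0 : -1 < ν) (hν1 : ν ≤ 0)
    (σ σ' : ℝ → ℝ)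
    (hsmooth : ContDiffOn ℝ (⊤ : ℕ∞) σ (Ici 0))
    (hderiv : ∀ p ∈ Ici (0:ℝ), HasDerivWithinAt σ (σ' p) (Ici 0) p)
    (hnonneg : ∀ p ∈ Ici (0:ℝ), 0 ≤ σ p)
    (hconvex : ConvexOn ℝ (Ici 0) σ)
    (hzero : σ 0 = 0) (hdzero : σ' 0 = 0)
    (hdconcave : ConcaveOn ℝ (Ici 0) σ') :
    ∀ z > (0:ℝ),
      σ z - (∫ y in Ioo (0:ℝ) z, σ y * breakage ν y z)
        ≥ (z * σ' z - σ z) / (ν + 3) := by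
  intro z hz
  have hzne : z ≠ 0 := hz.ne'
  have hν1' : (0:ℝ) < ν + 1 := by linarith
  have hν2 : (0:ℝ) < ν + 2 := by linarith
  have hν3 : (0:ℝ) < ν + 3 := by linarith
  have hzpow : (0:ℝ) < z ^ (1 + ν) := Real.rpow_pos_of_pos hz _
  set c : ℝ := (z * σ' z - σ z) / z ^ 2 with hc
  have key := frag_step1 σ σ' hderiv hzero hdconcave z hz
  rw [← hc] at key
  have hσcont : ContinuousOn σ (Ici 0) := fun p hp => (hderiv p hp).continuousWithinAt
  have hint1 : IntervalIntegrable (fun y => σ y * y ^ ν) volume 0 z :=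
    (intervalIntegral.intervalIntegrable_rpow' (by linarith)).continuousOn_mul
      (hσcont.mono (by rw [uIcc_of_le hz.le]; exact Icc_subset_Ici_self))
  have hint2 : IntervalIntegrable
      (fun y : ℝ => (σ z * y / z - c * (y * (z - y))) * y ^ ν) volume 0 z :=
    (intervalIntegral.intervalIntegrable_rpow' (by linarith)).continuousOn_mul
      (Continuous.continuousOn (by continuity))
  have hb : (∫ y in Ioo (0:ℝ) z, σ y * breakage ν y z)
      = (ν + 2) / z ^ (1 + ν) * ∫ y in (0:ℝ)..z, σ y * y ^ ν := by
    rw [intervalIntegral.integral_of_le hz.le, integral_Ioc_eq_integral_Ioo,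
      ← MeasureTheory.integral_const_mul]
    apply setIntegral_congr_fun measurableSet_Ioo
    intro y hy
    simp only [breakage, if_pos (⟨hy.1, hy.2⟩ : 0 < y ∧ y < z)]
    ring
  have hmono : (∫ y in (0:ℝ)..z, σ y * y ^ ν)
      ≤ ∫ y in (0:ℝ)..z, (σ z * y / z - c * (y * (z - y))) * y ^ ν := by
    apply intervalIntegral.integral_mono_on hz.le hint1 hint2
    intro y hy
    have hyν : (0:ℝ) ≤ y ^ ν := Real.rpow_nonneg hy.1 ν
    have hkey := key y hy
    calc σ y * y ^ ν ≤ (σ z * y / z - c * (y * (z - y))) * y ^ ν :=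
          mul_le_mul_of_nonneg_right (by linarith) hyν
      _ = _ := rfl
  have hre : EqOn (fun y : ℝ => (σ z * y / z - c * (y * (z - y))) * y ^ ν)
      (fun y : ℝ => (σ z / z - c * z) * y ^ (ν + 1) + c * y ^ (ν + 2)) (uIcc 0 z) := by
    intro y hy
    rw [uIcc_of_le hz.le] at hy
    rcases eq_or_lt_of_le hy.1 with h0 | h0
    · simp only [← h0]
      rw [Real.zero_rpow hν1'.ne', Real.zero_rpow hν2.ne']
      simp
    · have h1 : y ^ (ν + 1) = y ^ ν * y := by
        rw [Real.rpow_add h0, Real.rpow_one]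
      have h2 : y ^ (ν + 2) = y ^ ν * y ^ 2 := by
        rw [Real.rpow_add h0, show ((2:ℝ)) = ((2:ℕ):ℝ) by norm_num, Real.rpow_natCast]
      simp only [h1, h2]
      ring
  have hcalc : (∫ y in (0:ℝ)..z, (σ z * y / z - c * (y * (z - y))) * y ^ ν)
      = (σ z / z - c * z) * (z ^ (ν + 2) / (ν + 2)) + c * (z ^ (ν + 3) / (ν + 3)) := by
    rw [intervalIntegral.integral_congr hre,
      intervalIntegral.integral_add
        ((intervalIntegral.intervalIntegrable_rpow' (by linarith)).const_mul _)
        ((intervalIntegral.intervalIntegrable_rpow' (by linarith)).const_mul _),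
      intervalIntegral.integral_const_mul, intervalIntegral.integral_const_mul,
      integral_rpow (Or.inl (by linarith : (-1:ℝ) < ν + 1)),
      integral_rpow (Or.inl (by linarith : (-1:ℝ) < ν + 2)),
      Real.zero_rpow (by linarith : ν + 1 + 1 ≠ 0),
      Real.zero_rpow (by linarith : ν + 2 + 1 ≠ 0),
      show ν + 1 + 1 = ν + 2 by ring, show ν + 2 + 1 = ν + 3 by ring]
    ring
  have hz2 : z ^ (ν + 2) = z ^ (1 + ν) * z := by
    rw [show ν + 2 = (1 + ν) + 1 by ring, Real.rpow_add hz, Real.rpow_one]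
  have hz3 : z ^ (ν + 3) = z ^ (1 + ν) * z ^ 2 := by
    rw [show ν + 3 = (1 + ν) + 2 by ring, Real.rpow_add hz,
      show ((2:ℝ)) = ((2:ℕ):ℝ) by norm_num, Real.rpow_natCast]
  have hJ : (∫ y in Ioo (0:ℝ) z, σ y * breakage ν y z) ≤ σ z - c * z ^ 2 / (ν + 3) := by
    rw [hb]
    calc (ν + 2) / z ^ (1 + ν) * ∫ y in (0:ℝ)..z, σ y * y ^ ν
        ≤ (ν + 2) / z ^ (1 + ν)
          * ∫ y in (0:ℝ)..z, (σ z * y / z - c * (y * (z - y))) * y ^ ν :=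
          mul_le_mul_of_nonneg_left hmono (by positivity)
      _ = σ z - c * z ^ 2 / (ν + 3) := by
          rw [hcalc, hz2, hz3]
          field_simp
          ring
  have hcz : c * z ^ 2 = z * σ' z - σ z := by
    rw [hc]; field_simp
  rw [ge_iff_le, ← hcz]
  calc c * z ^ 2 / (ν + 3) = c * z ^ 2 / (ν + 3) := rfl
    _ ≤ σ z - ∫ y in Ioo (0:ℝ) z, σ y * breakage ν y z := by linarith
end
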